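/- arXiv:2205.10315 — 9 statements merged into one kernel-verified Lean document; each statement's English description precedes it below -/
import Mathlib

section
/- Let n be a positive integer, let H : ℝⁿ × ℝⁿ → ℝ be continuously differentiable, and let W : ℝⁿ → ℝ be twice continuously differentiable. Then the following are equivalent: (a) for every x ∈ ℝⁿ, ∇²W(x) (∂H/∂x*(x, ∇W(x))) = − ∂H/∂x(x, ∇W(x)) (i.e., the Hamiltonian vector field X_H and the projected vector field X_H^{dW} are dW-related, T(dW) ∘ X_H^{dW} = X_H ∘ dW); (b) the function x ↦ H(x, ∇W(x)) is constant on ℝⁿ (i.e., W solves the stationary Hamilton–Jacobi equation H(x, ∇W(x)) = ε for some constant ε). -/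
open scoped RealInnerProductSpace

noncomputable section

private lemma hj_aux {E : Type*} [NormedAddCommGroup E] [InnerProductSpace ℝ E]
    [CompleteSpace E]
    (H : E × E → ℝ) (W : E → ℝ)
    (hH : ContDiff ℝ 1 H) (hW : ContDiff ℝ 2 W) :
    (∀ x : E,
        fderiv ℝ (gradient W) x
            (gradient (fun p => H (x, p)) (gradient W x)) =
          -gradient (fun y => H (y, gradient W x)) x) ↔
      (∃ ε : ℝ, ∀ x : E, H (x, gradient W x) = ε) := by
  set g : E → E := gradient W with hg_def
  have hgrad_inner : ∀ (f : E → ℝ) (x v : E), ⟪gradient f x, v⟫ = fderiv ℝ f x v := by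
    intro f x v
    rw [gradient, InnerProductSpace.toDual_symm_apply]
  have h1 : ContDiff ℝ 1 (fderiv ℝ W) := hW.fderiv_right (by norm_num)
  have hg : ContDiff ℝ 1 g := by
    have : g = fun x => (InnerProductSpace.toDual ℝ E).symm (fderiv ℝ W x) := rfl
    rw [this]
    exact ((InnerProductSpace.toDual ℝ E).symm.contDiff).comp h1
  have hgd : Differentiable ℝ g := hg.differentiable one_ne_zero
  have hHd : Differentiable ℝ H := hH.differentiable one_ne_zero
  -- derivative of g in terms of second derivative of W
  have hDg : ∀ x v w : E, ⟪fderiv ℝ g x v, w⟫ = fderiv ℝ (fderiv ℝ W) x v w := by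
    intro x v w
    have e1 : (fun y => ⟪g y, w⟫) = fun y => fderiv ℝ W y w :=
      funext fun y => hgrad_inner W y w
    have hA : HasFDerivAt (fun y => ⟪g y, w⟫)
        (((innerSL ℝ (E := E)).flip w).comp (fderiv ℝ g x)) x :=
      ((innerSL ℝ (E := E)).flip w).hasFDerivAt.comp x (hgd x).hasFDerivAt
    have hB : HasFDerivAt (fun y => fderiv ℝ W y w)
        ((ContinuousLinearMap.apply ℝ ℝ w).comp (fderiv ℝ (fderiv ℝ W) x)) x :=
      (ContinuousLinearMap.apply ℝ ℝ w).hasFDerivAt.comp x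
        (h1.differentiable one_ne_zero x).hasFDerivAt
    have := hA.fderiv.symm.trans (by rw [e1] : fderiv ℝ (fun y => ⟪g y, w⟫) x
        = fderiv ℝ (fun y => fderiv ℝ W y w) x) |>.trans hB.fderiv
    have := congrFun (congrArg (fun (L : E →L[ℝ] ℝ) => (L : E → ℝ)) this) v
    have h4 : ⟪w, fderiv ℝ g x v⟫ = fderiv ℝ (fderiv ℝ W) x v w := by simp at this; exact this
    rw [real_inner_comm]; exact h4
  -- symmetry of second derivative
  have hsymm : ∀ x v w : E, ⟪fderiv ℝ g x v, w⟫ = ⟪fderiv ℝ g x w, v⟫ := by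
    intro x v w
    rw [hDg, hDg]
    exact (hW.contDiffAt.isSymmSndFDerivAt (by simp [minSmoothness_of_isRCLikeNormedField])) v w
  -- partial derivatives
  have hpart1 : ∀ x c v : E,
      fderiv ℝ (fun y => H (y, c)) x v = fderiv ℝ H (x, c) (v, 0) := by
    intro x c v
    have : HasFDerivAt (fun y => H (y, c))
        ((fderiv ℝ H (x, c)).comp (ContinuousLinearMap.inl ℝ E E)) x :=
      (hHd (x, c)).hasFDerivAt.comp x (hasFDerivAt_prodMk_left x c)
    rw [this.fderiv]; rfl
  have hpart2 : ∀ x c v : E,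
      fderiv ℝ (fun p => H (x, p)) c v = fderiv ℝ H (x, c) (0, v) := by
    intro x c v
    have : HasFDerivAt (fun p => H (x, p))
        ((fderiv ℝ H (x, c)).comp (ContinuousLinearMap.inr ℝ E E)) c :=
      (hHd (x, c)).hasFDerivAt.comp c (hasFDerivAt_prodMk_right x c)
    rw [this.fderiv]; rfl
  -- the composed function
  set F : E → ℝ := fun x => H (x, g x) with hF_def
  have hFdiff : ∀ x : E, HasFDerivAt F
      ((fderiv ℝ H (x, g x)).comp
        ((ContinuousLinearMap.id ℝ E).prod (fderiv ℝ g x))) x := by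
    intro x
    exact (hHd (x, g x)).hasFDerivAt.comp x (HasFDerivAt.prodMk (hasFDerivAt_id x) (hgd x).hasFDerivAt)
  -- key formula for fderiv F
  have hkey : ∀ x v : E, fderiv ℝ F x v =
      ⟪gradient (fun y => H (y, g x)) x
        + fderiv ℝ g x (gradient (fun p => H (x, p)) (g x)), v⟫ := by
    intro x v
    rw [(hFdiff x).fderiv]
    have h1 : ((fderiv ℝ H (x, g x)).comp
        ((ContinuousLinearMap.id ℝ E).prod (fderiv ℝ g x))) v
        = fderiv ℝ H (x, g x) (v, 0) + fderiv ℝ H (x, g x) (0, fderiv ℝ g x v) := by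
      simp only [ContinuousLinearMap.coe_comp', Function.comp_apply,
        ContinuousLinearMap.prod_apply, ContinuousLinearMap.coe_id', id_eq]
      rw [← map_add]
      congr 1
      simp [Prod.ext_iff]
    rw [h1, inner_add_left]
    congr 1
    · rw [hgrad_inner, hpart1]
    · rw [← hpart2, ← hgrad_inner (fun p => H (x, p)) (g x) (fderiv ℝ g x v),
        real_inner_comm, hsymm, real_inner_comm]
  have hFdiff' : Differentiable ℝ F := fun x => (hFdiff x).differentiableAt
  constructor
  · intro h
    refine ⟨F 0, fun x => ?_⟩
    have hzero : ∀ x : E, fderiv ℝ F x = 0 := by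
      intro x
      ext v
      rw [hkey, h x]
      simp
    exact is_const_of_fderiv_eq_zero hFdiff' hzero x 0
  · rintro ⟨ε, hε⟩ x
    have hFc : F = fun _ => ε := funext hε
    have hzero : fderiv ℝ F x = 0 := by rw [hFc]; exact fderiv_const_apply ε
    have h0 : ∀ v : E, ⟪gradient (fun y => H (y, g x)) x
        + fderiv ℝ g x (gradient (fun p => H (x, p)) (g x)), v⟫ = 0 := by
      intro v
      rw [← hkey, hzero]
      rfl
    have h2 := h0 (gradient (fun y => H (y, g x)) x
        + fderiv ℝ g x (gradient (fun p => H (x, p)) (g x)))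
    rw [inner_self_eq_zero] at h2
    have h3 := eq_neg_of_add_eq_zero_right h2
    exact h3

/-- For `H : ℝⁿ × ℝⁿ → ℝ` (C¹) and `W : ℝⁿ → ℝ` (C²), the dW-relatedness
`T(dW) ∘ X_H^{dW} = X_H ∘ dW` holds iff `W` solves the stationary Hamilton–Jacobi
equation `H(x, ∇W(x)) = ε`. -/
theorem generic_hamilton_jacobi
    (n : ℕ) (hn : 0 < n)
    (H : EuclideanSpace ℝ (Fin n) × EuclideanSpace ℝ (Fin n) → ℝ)
    (W : EuclideanSpace ℝ (Fin n) → ℝ)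
    (hH : ContDiff ℝ 1 H) (hW : ContDiff ℝ 2 W) :
    (∀ x : EuclideanSpace ℝ (Fin n),
        fderiv ℝ (gradient W) x
            (gradient (fun p => H (x, p)) (gradient W x)) =
          -gradient (fun y => H (y, gradient W x)) x) ↔
      (∃ ε : ℝ, ∀ x : EuclideanSpace ℝ (Fin n), H (x, gradient W x) = ε) := by
  exact hj_aux H W hH hW
end
end

section
/- Let H : ℝⁿ × ℝⁿ → ℝ be continuously differentiable and W : ℝⁿ → ℝ twice continuously differentiable. Then the following three conditions are equivalent: (1) the vertical representative of X_H vanishes on the first jet prolongation of dW, i.e., for every x ∈ ℝⁿ, −∂H/∂x(x, ∇W(x)) − ∇²W(x)(∂H/∂x*(x, ∇W(x))) = 0; (2) the holonomic part of X_H composed with the first jet prolongation of dW equals X_H ∘ dW, i.e., for every x, (∂H/∂x*(x, ∇W(x)), ∇²W(x) ∂H/∂x*(x, ∇W(x))) = (∂H/∂x*(x, ∇W(x)), −∂H/∂x(x, ∇W(x))); (3) the function x ↦ H(x, ∇W(x)) is constant on ℝⁿ. -/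
open scoped RealInnerProductSpace
open InnerProductSpace

noncomputable section

section Aux

variable {E : Type*} [NormedAddCommGroup E] [InnerProductSpace ℝ E] [CompleteSpace E]

lemma inner_gradient_eq (f : E → ℝ) (x v : E) :
    ⟪gradient f x, v⟫ = fderiv ℝ f x v := by
  simp [gradient, toDual_symm_apply]

lemma contDiff_gradient {W : E → ℝ} (hW : ContDiff ℝ 2 W) :
    ContDiff ℝ 1 (gradient W) := by
  have : gradient W = fun x => (toDual ℝ E).symm (fderiv ℝ W x) := rfl
  rw [this]
  exact ((toDual ℝ E).symm.contDiff).comp (hW.fderiv_right (le_refl _))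

/-- symmetry of the Hessian (as `fderiv` of the gradient). -/
lemma hessian_symm {W : E → ℝ} (hW : ContDiff ℝ 2 W) (x u v : E) :
    ⟪fderiv ℝ (gradient W) x u, v⟫ = ⟪u, fderiv ℝ (gradient W) x v⟫ := by
  have hWd : Differentiable ℝ W := hW.differentiable (by norm_num)
  have hg : Differentiable ℝ (gradient W) := (contDiff_gradient hW).differentiable one_ne_zero
  have hA : HasFDerivAt (gradient W) (fderiv ℝ (gradient W) x) x := (hg x).hasFDerivAt
  have hdual : ∀ y, fderiv ℝ W y = (toDual ℝ E) (gradient W y) := by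
    intro y
    exact ((toDual ℝ E).apply_symm_apply (fderiv ℝ W y)).symm
  have h2 : HasFDerivAt (fderiv ℝ W)
      (((toDual ℝ E).toContinuousLinearEquiv : E ≃L[ℝ] _).toContinuousLinearMap.comp
        (fderiv ℝ (gradient W) x)) x := by
    have := (((toDual ℝ E).toContinuousLinearEquiv :
        E ≃L[ℝ] StrongDual ℝ E).toContinuousLinearMap.hasFDerivAt).comp x hA
    have hf : fderiv ℝ W = ⇑((toDual ℝ E).toContinuousLinearEquiv : E ≃L[ℝ] StrongDual ℝ E) ∘ gradient W := funext hdual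
    rw [hf]; exact this
  have hsymm := second_derivative_symmetric (f := W) (f' := fderiv ℝ W)
    (fun y => (hWd y).hasFDerivAt) h2 u v
  simp only [ContinuousLinearMap.coe_comp', Function.comp_apply,
    ContinuousLinearEquiv.coe_coe, LinearIsometryEquiv.coe_toContinuousLinearEquiv,
    toDual_apply_apply] at hsymm
  rw [hsymm, real_inner_comm]

lemma hasGradientAt_comp_gradient {H : E × E → ℝ} {W : E → ℝ}
    (hH : ContDiff ℝ 1 H) (hW : ContDiff ℝ 2 W) (x : E) :
    HasGradientAt (fun y => H (y, gradient W y))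
      (gradient (fun y => H (y, gradient W x)) x +
        fderiv ℝ (gradient W) x (gradient (fun p => H (x, p)) (gradient W x))) x := by
  have hHd : Differentiable ℝ H := hH.differentiable one_ne_zero
  have hg : Differentiable ℝ (gradient W) := (contDiff_gradient hW).differentiable one_ne_zero
  set gx := gradient W x
  set A := fderiv ℝ (gradient W) x
  set DH := fderiv ℝ H (x, gx)
  -- inner map
  have hinner : HasFDerivAt (fun y : E => (y, gradient W y))
      ((ContinuousLinearMap.id ℝ E).prod A) x :=
    (hasFDerivAt_id x).prodMk (hg x).hasFDerivAt
  have hF : HasFDerivAt (fun y => H (y, gradient W y))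
      (DH.comp ((ContinuousLinearMap.id ℝ E).prod A)) x :=
    (hHd (x, gx)).hasFDerivAt.comp x hinner
  -- partial fderivs
  have h1 : fderiv ℝ (fun y => H (y, gx)) x = DH.comp (ContinuousLinearMap.inl ℝ E E) :=
    ((hHd (x, gx)).hasFDerivAt.comp x (hasFDerivAt_prodMk_left x gx)).fderiv
  have h2 : fderiv ℝ (fun p => H (x, p)) gx = DH.comp (ContinuousLinearMap.inr ℝ E E) :=
    ((hHd (x, gx)).hasFDerivAt.comp gx (hasFDerivAt_prodMk_right x gx)).fderiv
  rw [hasGradientAt_iff_hasFDerivAt]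
  refine (hF.congr_fderiv ?_)
  symm
  ext v
  simp only [toDual_apply_apply, ContinuousLinearMap.coe_comp', Function.comp_apply,
    ContinuousLinearMap.prod_apply, ContinuousLinearMap.coe_id', id_eq]
  rw [inner_add_left]
  have e1 : ⟪gradient (fun y => H (y, gx)) x, v⟫ = DH (v, 0) := by
    rw [inner_gradient_eq, h1]; rfl
  have e2 : ⟪A (gradient (fun p => H (x, p)) gx), v⟫ = DH (0, A v) := by
    rw [hessian_symm hW, inner_gradient_eq, h2]; rfl
  rw [e1, e2, ← map_add]
  congr 1
  simp [Prod.ext_iff]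

end Aux

/-- equivalence of (1) vanishing of the vertical representative of `X_H`
on the first jet prolongation of `dW`, (2) the holonomic part composed with the jet
prolongation equalling `X_H ∘ dW`, and (3) `x ↦ H(x, ∇W(x))` being constant. -/
theorem holonomic_vertical_hamilton_jacobi
    (n : ℕ)
    (H : EuclideanSpace ℝ (Fin n) × EuclideanSpace ℝ (Fin n) → ℝ)
    (W : EuclideanSpace ℝ (Fin n) → ℝ)
    (hH : ContDiff ℝ 1 H) (hW : ContDiff ℝ 2 W) :
    ((∀ x : EuclideanSpace ℝ (Fin n),
        -gradient (fun y => H (y, gradient W x)) x -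
          fderiv ℝ (gradient W) x
            (gradient (fun p => H (x, p)) (gradient W x)) = 0) ↔
      (∀ x : EuclideanSpace ℝ (Fin n),
        ((gradient (fun p => H (x, p)) (gradient W x),
            fderiv ℝ (gradient W) x
              (gradient (fun p => H (x, p)) (gradient W x))) :
          EuclideanSpace ℝ (Fin n) × EuclideanSpace ℝ (Fin n)) =
        (gradient (fun p => H (x, p)) (gradient W x),
          -gradient (fun y => H (y, gradient W x)) x))) ∧
    ((∀ x : EuclideanSpace ℝ (Fin n),
        ((gradient (fun p => H (x, p)) (gradient W x),
            fderiv ℝ (gradient W) x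
              (gradient (fun p => H (x, p)) (gradient W x))) :
          EuclideanSpace ℝ (Fin n) × EuclideanSpace ℝ (Fin n)) =
        (gradient (fun p => H (x, p)) (gradient W x),
          -gradient (fun y => H (y, gradient W x)) x)) ↔
      (∃ ε : ℝ, ∀ x : EuclideanSpace ℝ (Fin n), H (x, gradient W x) = ε)) := by
  have key := hasGradientAt_comp_gradient hH hW
  have pair_iff : ∀ x : EuclideanSpace ℝ (Fin n),
      (((gradient (fun p => H (x, p)) (gradient W x),
          fderiv ℝ (gradient W) x (gradient (fun p => H (x, p)) (gradient W x))) :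
        EuclideanSpace ℝ (Fin n) × EuclideanSpace ℝ (Fin n)) =
        (gradient (fun p => H (x, p)) (gradient W x),
          -gradient (fun y => H (y, gradient W x)) x)) ↔
      gradient (fun y => H (y, gradient W x)) x +
        fderiv ℝ (gradient W) x (gradient (fun p => H (x, p)) (gradient W x)) = 0 := by
    intro x
    rw [Prod.mk.injEq, and_iff_right rfl]
    constructor
    · intro h; rw [h]; abel
    · intro h; rw [← neg_eq_iff_add_eq_zero] at h; rw [← h]
  constructor
  · constructor
    · intro h x
      rw [pair_iff x]
      have := h x
      rw [show ∀ a b : EuclideanSpace ℝ (Fin n), -a - b = -(a + b) from fun a b => by abel,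
        neg_eq_zero] at this
      exact this
    · intro h x
      have := (pair_iff x).mp (h x)
      rw [show ∀ a b : EuclideanSpace ℝ (Fin n), -a - b = -(a + b) from fun a b => by abel,
        neg_eq_zero]
      exact this
  · constructor
    · intro h
      refine ⟨H (0, gradient W 0), fun x => ?_⟩
      have hzero : ∀ x, gradient (fun y => H (y, gradient W x)) x +
          fderiv ℝ (gradient W) x (gradient (fun p => H (x, p)) (gradient W x)) = 0 :=
        fun x => (pair_iff x).mp (h x)
      have hdiff : Differentiable ℝ (fun y => H (y, gradient W y)) :=
        fun y => ((key y).hasFDerivAt).differentiableAt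
      have hfd : ∀ y, fderiv ℝ (fun y => H (y, gradient W y)) y = 0 := by
        intro y
        have h0 : HasGradientAt (fun y => H (y, gradient W y)) 0 y := by
          have := key y; rwa [hzero y] at this
        rw [h0.hasFDerivAt.fderiv]
        simp
      exact is_const_of_fderiv_eq_zero hdiff hfd x 0
    · rintro ⟨ε, hε⟩ x
      rw [pair_iff x]
      have hconst : HasGradientAt (fun y => H (y, gradient W y)) 0 x := by
        have : (fun y : EuclideanSpace ℝ (Fin n) => H (y, gradient W y)) = fun _ => ε := by
          funext y; exact hε y
        rw [this, hasGradientAt_iff_hasFDerivAt]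
        simpa using hasFDerivAt_const ε x
      have := (key x).hasFDerivAt.unique hconst.hasFDerivAt
      have := (toDual ℝ (EuclideanSpace ℝ (Fin n))).injective this
      exact this
end
end

section
/- Let Ξ : ℝⁿ × ℝⁿ → ℝ (a dissipation potential) be continuously differentiable and let S : ℝⁿ → ℝ (the entropy) be twice continuously differentiable. Then the Hamiltonian vector field X_Ξ and the projected gradient vector field X_Ξ^{dS} are compatible in the sense that T(dS) ∘ X_Ξ^{dS} = X_Ξ ∘ dS, i.e., ∇²S(x)(∂Ξ/∂x*(x, ∇S(x))) = −∂Ξ/∂x(x, ∇S(x)) for all x ∈ ℝⁿ, if and only if the entropy solves the stationary Hamilton–Jacobi equation, i.e., the function x ↦ Ξ(x, ∇S(x)) is constant on ℝⁿ. -/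
open scoped RealInnerProductSpace

noncomputable section

/-- the Hamiltonian vector field `X_Ξ` of a dissipation potential and the
projected gradient vector field `X_Ξ^{dS}` are `dS`-compatible iff the entropy solves
the stationary Hamilton–Jacobi equation `Ξ(x, ∇S(x)) = ε`. -/
theorem gradient_flow_hamilton_jacobi
    (n : ℕ)
    (Ξ : EuclideanSpace ℝ (Fin n) × EuclideanSpace ℝ (Fin n) → ℝ)
    (S : EuclideanSpace ℝ (Fin n) → ℝ)
    (hΞ : ContDiff ℝ 1 Ξ) (hS : ContDiff ℝ 2 S) :
    (∀ x : EuclideanSpace ℝ (Fin n),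
        fderiv ℝ (gradient S) x
            (gradient (fun p => Ξ (x, p)) (gradient S x)) =
          -gradient (fun y => Ξ (y, gradient S x)) x) ↔
      (∃ ε : ℝ, ∀ x : EuclideanSpace ℝ (Fin n), Ξ (x, gradient S x) = ε) := by
  set G : EuclideanSpace ℝ (Fin n) → EuclideanSpace ℝ (Fin n) := gradient S with hGdef
  have hfS : ContDiff ℝ 1 (fderiv ℝ S) := hS.fderiv_right (by norm_num)
  -- the inverse dual map is ℝ-bounded-linear
  have hbdd : IsBoundedLinearMap ℝ
      (fun L : StrongDual ℝ (EuclideanSpace ℝ (Fin n)) =>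
        (InnerProductSpace.toDual ℝ (EuclideanSpace ℝ (Fin n))).symm L) := by
    refine ⟨⟨fun L M => by simp, fun c L => by simp⟩, 1, one_pos, fun L => by simp⟩
  have hG : ContDiff ℝ 1 G := hbdd.contDiff.comp hfS
  have hGdiff : Differentiable ℝ G := hG.differentiable one_ne_zero
  have hΞdiff : Differentiable ℝ Ξ := hΞ.differentiable one_ne_zero
  have hinner : ∀ (f : EuclideanSpace ℝ (Fin n) → ℝ) (x v : EuclideanSpace ℝ (Fin n)),
      ⟪gradient f x, v⟫ = fderiv ℝ f x v := fun f x v =>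
    InnerProductSpace.toDual_symm_apply
  -- partial gradients
  have hgx : ∀ x v : EuclideanSpace ℝ (Fin n),
      ⟪gradient (fun y => Ξ (y, G x)) x, v⟫ = fderiv ℝ Ξ (x, G x) (v, 0) := by
    intro x v
    rw [hinner]
    have h1 : HasFDerivAt (fun y : EuclideanSpace ℝ (Fin n) => (y, G x))
        ((ContinuousLinearMap.id ℝ _).prod 0) x :=
      (hasFDerivAt_id x).prodMk (hasFDerivAt_const (G x) x)
    have h2 := ((hΞdiff (x, G x)).hasFDerivAt).comp x h1
    have h3 : fderiv ℝ (fun y => Ξ (y, G x)) x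
        = (fderiv ℝ Ξ (x, G x)).comp ((ContinuousLinearMap.id ℝ _).prod 0) := h2.fderiv
    rw [h3]; simp
  have hgp : ∀ x w : EuclideanSpace ℝ (Fin n),
      ⟪gradient (fun p => Ξ (x, p)) (G x), w⟫ = fderiv ℝ Ξ (x, G x) (0, w) := by
    intro x w
    rw [hinner]
    have h1 : HasFDerivAt (fun p : EuclideanSpace ℝ (Fin n) => (x, p))
        ((0 : EuclideanSpace ℝ (Fin n) →L[ℝ] EuclideanSpace ℝ (Fin n)).prod
          (ContinuousLinearMap.id ℝ _)) (G x) :=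
      (hasFDerivAt_const x (G x)).prodMk (hasFDerivAt_id (G x))
    have h2 := ((hΞdiff (x, G x)).hasFDerivAt).comp (G x) h1
    have h3 : fderiv ℝ (fun p => Ξ (x, p)) (G x)
        = (fderiv ℝ Ξ (x, G x)).comp
          ((0 : EuclideanSpace ℝ (Fin n) →L[ℝ] EuclideanSpace ℝ (Fin n)).prod
            (ContinuousLinearMap.id ℝ _)) := h2.fderiv
    rw [h3]; simp
  -- symmetry of the second derivative of S, as fderiv of the gradient
  have hval : ∀ x a b : EuclideanSpace ℝ (Fin n),
      ⟪fderiv ℝ G x a, b⟫ = fderiv ℝ (fderiv ℝ S) x a b := by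
    intro x a b
    have hL : HasFDerivAt (fun y => ⟪b, G y⟫)
        ((innerSL ℝ b).comp (fderiv ℝ G x)) x :=
      ((innerSL ℝ b).hasFDerivAt).comp x (hGdiff x).hasFDerivAt
    have hR : HasFDerivAt (fun y => fderiv ℝ S y b)
        ((ContinuousLinearMap.apply ℝ ℝ b).comp (fderiv ℝ (fderiv ℝ S) x)) x :=
      ((ContinuousLinearMap.apply ℝ ℝ b).hasFDerivAt).comp x
        ((hfS.differentiable one_ne_zero x).hasFDerivAt)
    have heq : (fun y => ⟪b, G y⟫) = fun y => fderiv ℝ S y b := by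
      funext y
      rw [real_inner_comm, hinner]
    rw [heq] at hL
    have := hL.unique hR
    calc ⟪fderiv ℝ G x a, b⟫ = ⟪b, fderiv ℝ G x a⟫ := real_inner_comm _ _
      _ = ((innerSL ℝ b).comp (fderiv ℝ G x)) a := rfl
      _ = ((ContinuousLinearMap.apply ℝ ℝ b).comp (fderiv ℝ (fderiv ℝ S) x)) a := by rw [this]
      _ = fderiv ℝ (fderiv ℝ S) x a b := rfl
  have hsym : ∀ x u v : EuclideanSpace ℝ (Fin n),
      ⟪fderiv ℝ G x u, v⟫ = ⟪u, fderiv ℝ G x v⟫ := by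
    intro x u v
    have hs : IsSymmSndFDerivAt ℝ S x := hS.contDiffAt.isSymmSndFDerivAt (by simp)
    rw [hval, real_inner_comm, hval]
    exact hs.eq u v
  -- key derivative computation
  have key : ∀ x v : EuclideanSpace ℝ (Fin n), fderiv ℝ (fun y => Ξ (y, G y)) x v
      = ⟪gradient (fun y => Ξ (y, G x)) x
          + fderiv ℝ G x (gradient (fun p => Ξ (x, p)) (G x)), v⟫ := by
    intro x v
    have h1 : HasFDerivAt (fun y : EuclideanSpace ℝ (Fin n) => (y, G y))
        ((ContinuousLinearMap.id ℝ _).prod (fderiv ℝ G x)) x :=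
      (hasFDerivAt_id x).prodMk (hGdiff x).hasFDerivAt
    have h2 := ((hΞdiff (x, G x)).hasFDerivAt).comp x h1
    have h3 : fderiv ℝ (fun y => Ξ (y, G y)) x
        = (fderiv ℝ Ξ (x, G x)).comp
          ((ContinuousLinearMap.id ℝ _).prod (fderiv ℝ G x)) := h2.fderiv
    rw [h3]
    have hsplit : ((v, fderiv ℝ G x v) : _ × _) = (v, 0) + (0, fderiv ℝ G x v) := by simp
    simp only [ContinuousLinearMap.comp_apply, ContinuousLinearMap.prod_apply,
      ContinuousLinearMap.id_apply]
    rw [inner_add_left, hgx, hsplit, map_add]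
    congr 1
    rw [hsym x _ v]
    exact (hgp x _).symm
  constructor
  · intro h
    have hF : Differentiable ℝ fun y => Ξ (y, G y) :=
      hΞdiff.comp (differentiable_id.prodMk hGdiff)
    have hz : ∀ x, fderiv ℝ (fun y => Ξ (y, G y)) x = 0 := by
      intro x
      ext v
      rw [key x v, h x]
      simp
    exact ⟨Ξ (0, G 0), fun x => is_const_of_fderiv_eq_zero hF hz x 0⟩
  · intro ⟨ε, h⟩ x
    have hconst : (fun y => Ξ (y, G y)) = fun _ => ε := funext h
    have hzero : gradient (fun y => Ξ (y, G x)) x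
        + fderiv ℝ G x (gradient (fun p => Ξ (x, p)) (G x)) = 0 := by
      apply ext_inner_right ℝ
      intro v
      rw [← key x v, hconst, fderiv_fun_const, inner_zero_left]
      simp
    exact eq_neg_of_add_eq_zero_left (by rw [add_comm]; exact hzero)
end
end

section
/- Let 𝕃 : ℝⁿ → (n×n real matrices) be continuously differentiable, let Φ : ℝⁿ → ℝ be twice continuously differentiable, let e* be a nonzero real number, and let Ξ : ℝⁿ × ℝⁿ → ℝ be continuously differentiable. Define the dynamic potential Ψ : ℝⁿ × ℝⁿ → ℝ by Ψ(x, x*) = (1/e*) ⟨x*, 𝕃(x) ∇Φ(x)⟩ − Ξ(x, x*). Then the Hamiltonian vector field X_Ψ and the GENERIC vector field X_Ψ^{dΦ} are related by T(dΦ) ∘ X_Ψ^{dΦ} = X_Ψ ∘ dΦ, i.e., ∇²Φ(x)(∂Ψ/∂x*(x, ∇Φ(x))) = −∂Ψ/∂x(x, ∇Φ(x)) for all x ∈ ℝⁿ, if and only if the thermodynamic potential Φ solves the stationary Hamilton–Jacobi equation, i.e., the function x ↦ Ψ(x, ∇Φ(x)) is constant on ℝⁿ. -/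
open scoped RealInnerProductSpace

noncomputable section

/-- for the dynamic potential
`Ψ(x,x*) = (1/e*)⟨x*, 𝕃(x)∇Φ(x)⟩ − Ξ(x,x*)`, the Hamiltonian vector field `X_Ψ` and the
GENERIC vector field `X_Ψ^{dΦ}` are `dΦ`-related iff `Φ` solves the stationary
Hamilton–Jacobi equation `Ψ(x, ∇Φ(x)) = ε`. -/
theorem generic_flow_hamilton_jacobi
    (n : ℕ)
    (L : EuclideanSpace ℝ (Fin n) →
      (EuclideanSpace ℝ (Fin n) →L[ℝ] EuclideanSpace ℝ (Fin n)))
    (hL : ContDiff ℝ 1 L)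
    (Φ : EuclideanSpace ℝ (Fin n) → ℝ) (hΦ : ContDiff ℝ 2 Φ)
    (estar : ℝ) (he : estar ≠ 0)
    (Ξ : EuclideanSpace ℝ (Fin n) × EuclideanSpace ℝ (Fin n) → ℝ)
    (hΞ : ContDiff ℝ 1 Ξ)
    (Ψ : EuclideanSpace ℝ (Fin n) × EuclideanSpace ℝ (Fin n) → ℝ)
    (hΨ : ∀ xp : EuclideanSpace ℝ (Fin n) × EuclideanSpace ℝ (Fin n),
      Ψ xp = (1 / estar) * ⟪xp.2, L xp.1 (gradient Φ xp.1)⟫ - Ξ xp) :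
    (∀ x : EuclideanSpace ℝ (Fin n),
        fderiv ℝ (gradient Φ) x
            (gradient (fun p => Ψ (x, p)) (gradient Φ x)) =
          -gradient (fun y => Ψ (y, gradient Φ x)) x) ↔
      (∃ ε : ℝ, ∀ x : EuclideanSpace ℝ (Fin n), Ψ (x, gradient Φ x) = ε) := by
  -- the gradient of Φ is C¹
  have hgradΦ : ContDiff ℝ 1 (gradient Φ) := by
    have h1 : ContDiff ℝ 1 (fderiv ℝ Φ) := hΦ.fderiv_right (by norm_num)
    exact ((InnerProductSpace.toDual ℝ (EuclideanSpace ℝ (Fin n))).symm.contDiff).comp h1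
  -- Ψ is C¹
  have hΨeq : Ψ = fun p : EuclideanSpace ℝ (Fin n) × EuclideanSpace ℝ (Fin n) =>
      (1 / estar) * ⟪p.2, L p.1 (gradient Φ p.1)⟫ - Ξ p := funext hΨ
  have hΨc : ContDiff ℝ 1 Ψ := by
    rw [hΨeq]
    exact (contDiff_const.mul
      (ContDiff.inner ℝ contDiff_snd
        ((hL.comp contDiff_fst).clm_apply (hgradΦ.comp contDiff_fst)))).sub hΞ
  have hFc : ContDiff ℝ 1 (fun y : EuclideanSpace ℝ (Fin n) => Ψ (y, gradient Φ y)) :=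
    hΨc.comp (contDiff_id.prodMk hgradΦ)
  have hFd : Differentiable ℝ (fun y : EuclideanSpace ℝ (Fin n) => Ψ (y, gradient Φ y)) :=
    hFc.differentiable one_ne_zero
  -- the pointwise equivalence
  have key : ∀ x : EuclideanSpace ℝ (Fin n),
      (fderiv ℝ (gradient Φ) x (gradient (fun p => Ψ (x, p)) (gradient Φ x)) =
        -gradient (fun y => Ψ (y, gradient Φ x)) x) ↔
      fderiv ℝ (fun y : EuclideanSpace ℝ (Fin n) => Ψ (y, gradient Φ y)) x = 0 := by
    intro x
    set q : EuclideanSpace ℝ (Fin n) := gradient Φ x with hq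
    set D := fderiv ℝ Ψ (x, q) with hD
    set H := fderiv ℝ (gradient Φ) x with hH
    have hΨd : DifferentiableAt ℝ Ψ (x, q) := (hΨc.differentiable one_ne_zero) _
    have hprod : HasFDerivAt (fun y : EuclideanSpace ℝ (Fin n) => (y, gradient Φ y))
        ((ContinuousLinearMap.id ℝ (EuclideanSpace ℝ (Fin n))).prod H) x :=
      (hasFDerivAt_id x).prodMk ((hgradΦ.differentiable one_ne_zero x).hasFDerivAt)
    have hF' : HasFDerivAt (fun y : EuclideanSpace ℝ (Fin n) => Ψ (y, gradient Φ y))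
        (D.comp ((ContinuousLinearMap.id ℝ (EuclideanSpace ℝ (Fin n))).prod H)) x :=
      hΨd.hasFDerivAt.comp x hprod
    have h1 : HasFDerivAt (fun y : EuclideanSpace ℝ (Fin n) => Ψ (y, q))
        (D.comp (ContinuousLinearMap.inl ℝ _ _)) x :=
      hΨd.hasFDerivAt.comp x (hasFDerivAt_prodMk_left x q)
    have h2 : HasFDerivAt (fun p : EuclideanSpace ℝ (Fin n) => Ψ (x, p))
        (D.comp (ContinuousLinearMap.inr ℝ _ _)) q :=
      hΨd.hasFDerivAt.comp q (hasFDerivAt_prodMk_right x q)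
    set g1 : EuclideanSpace ℝ (Fin n) := gradient (fun y => Ψ (y, q)) x with hg1
    set g2 : EuclideanSpace ℝ (Fin n) := gradient (fun p => Ψ (x, p)) q with hg2
    have hg1' : ∀ v : EuclideanSpace ℝ (Fin n), ⟪g1, v⟫ = D (v, 0) := by
      intro v
      rw [hg1, gradient, h1.fderiv, InnerProductSpace.toDual_symm_apply]
      rfl
    have hg2' : ∀ w : EuclideanSpace ℝ (Fin n), ⟪g2, w⟫ = D (0, w) := by
      intro w
      rw [hg2, gradient, h2.fderiv, InnerProductSpace.toDual_symm_apply]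
      rfl
    -- symmetry of the Hessian H
    have hsymm : ∀ v w : EuclideanSpace ℝ (Fin n), ⟪H v, w⟫ = ⟪H w, v⟫ := by
      have hsnd : IsSymmSndFDerivAt ℝ Φ x := hΦ.contDiffAt.isSymmSndFDerivAt (by simp)
      have hHe : ∀ v : EuclideanSpace ℝ (Fin n), H v =
          (InnerProductSpace.toDual ℝ (EuclideanSpace ℝ (Fin n))).symm
            (fderiv ℝ (fderiv ℝ Φ) x v) := by
        intro v
        have hcomp : gradient Φ =
            (InnerProductSpace.toDual ℝ (EuclideanSpace ℝ (Fin n))).symm ∘ fderiv ℝ Φ := rfl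
        rw [hH, hcomp, LinearIsometryEquiv.comp_fderiv]
        rfl
      intro v w
      rw [hHe v, hHe w, InnerProductSpace.toDual_symm_apply,
        InnerProductSpace.toDual_symm_apply]
      exact hsnd v w
    have hFv : ∀ v : EuclideanSpace ℝ (Fin n),
        fderiv ℝ (fun y : EuclideanSpace ℝ (Fin n) => Ψ (y, gradient Φ y)) x v =
          ⟪g1 + H g2, v⟫ := by
      intro v
      rw [hF'.fderiv]
      have hsplit : D (v, H v) = D (v, 0) + D (0, H v) := by
        rw [← map_add]
        congr 1
        simp
      have happ : (D.comp
          ((ContinuousLinearMap.id ℝ (EuclideanSpace ℝ (Fin n))).prod H)) v = D (v, H v) := rfl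
      rw [happ, hsplit, ← hg1' v, ← hg2' (H v), inner_add_left]
      congr 1
      rw [real_inner_comm]
      exact hsymm v g2
    constructor
    · intro h
      ext v
      have hzero : g1 + H g2 = 0 := by rw [h]; simp
      rw [hFv v, hzero]
      simp
    · intro h
      have hzero : g1 + H g2 = 0 := by
        have h0 := hFv (g1 + H g2)
        rw [h] at h0
        simp only [ContinuousLinearMap.zero_apply] at h0
        exact inner_self_eq_zero.mp h0.symm
      rw [eq_neg_iff_add_eq_zero, add_comm]
      exact hzero
  constructor
  · intro h
    refine ⟨Ψ (0, gradient Φ 0), fun x => ?_⟩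
    exact is_const_of_fderiv_eq_zero hFd (fun y => (key y).mp (h y)) x 0
  · rintro ⟨ε, hε⟩ x
    apply (key x).mpr
    have hconst : (fun y : EuclideanSpace ℝ (Fin n) => Ψ (y, gradient Φ y)) =
        fun _ => ε := funext hε
    rw [hconst]
    exact fderiv_const_apply ε
end
end

section
/- Let H : ℝⁿ × ℝⁿ × ℝ → ℝ be continuously differentiable and W : ℝⁿ → ℝ twice continuously differentiable. Then the following are equivalent: (a) the evolution vector field ε_H and the projected vector field ε_H^{𝒯*W} are 𝒯*W-related, T(𝒯*W) ∘ ε_H^{𝒯*W} = ε_H ∘ 𝒯*W, i.e., for every x ∈ ℝⁿ, ∇²W(x)(H_{x*}(x, ∇W(x), W(x))) = −H_x(x, ∇W(x), W(x)) − H_z(x, ∇W(x), W(x)) · ∇W(x); (b) the function x ↦ H(x, ∇W(x), W(x)) is constant on ℝⁿ (the evolution Hamilton–Jacobi equation H(x, ∇W(x), W(x)) = ε). -/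
open scoped RealInnerProductSpace
noncomputable section

open InnerProductSpace in
theorem evolution_hj_aux {E : Type*} [NormedAddCommGroup E] [InnerProductSpace ℝ E]
    [CompleteSpace E]
    (H : E × E × ℝ → ℝ) (W : E → ℝ)
    (hH : ContDiff ℝ 1 H) (hW : ContDiff ℝ 2 W) :
    (∀ x : E,
        fderiv ℝ (gradient W) x
            (gradient (fun p => H (x, p, W x)) (gradient W x)) =
          -gradient (fun y => H (y, gradient W x, W x)) x -
            deriv (fun z => H (x, gradient W x, z)) (W x) • gradient W x) ↔
      (∃ ε : ℝ, ∀ x : E, H (x, gradient W x, W x) = ε) := by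
  have hHd : Differentiable ℝ H := hH.differentiable one_ne_zero
  have hWd : Differentiable ℝ W := hW.differentiable (by norm_num)
  have hW1 : ContDiff ℝ 1 (fderiv ℝ W) := hW.fderiv_right (by norm_num)
  have hW1d : Differentiable ℝ (fderiv ℝ W) := hW1.differentiable one_ne_zero
  set Lc : (E →L[ℝ] ℝ) →L[ℝ] E :=
    (toDual ℝ E).symm.toContinuousLinearEquiv.toContinuousLinearMap with hLc
  have hGderiv : ∀ x : E,
      HasFDerivAt (gradient W) (Lc.comp (fderiv ℝ (fderiv ℝ W) x)) x := fun x =>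
    Lc.hasFDerivAt.comp x (hW1d x).hasFDerivAt
  have hGd : Differentiable ℝ (gradient W) := fun x => (hGderiv x).differentiableAt
  -- symmetry of the Hessian
  have hsymm : ∀ (x u v : E),
      ⟪fderiv ℝ (gradient W) x u, v⟫ = ⟪fderiv ℝ (gradient W) x v, u⟫ := by
    intro x u v
    rw [(hGderiv x).fderiv]
    show ⟪(toDual ℝ E).symm (fderiv ℝ (fderiv ℝ W) x u), v⟫
        = ⟪(toDual ℝ E).symm (fderiv ℝ (fderiv ℝ W) x v), u⟫
    rw [toDual_symm_apply, toDual_symm_apply]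
    exact second_derivative_symmetric (fun y => (hWd y).hasFDerivAt)
      (hW1d x).hasFDerivAt u v
  have hfW : ∀ (x u : E), fderiv ℝ W x u = ⟪gradient W x, u⟫ := fun x u =>
    (toDual_symm_apply (y := fderiv ℝ W x) (x := u)).symm
  -- partial gradients
  have hg1 : ∀ (x u : E), ⟪gradient (fun y => H (y, gradient W x, W x)) x, u⟫
      = fderiv ℝ H (x, gradient W x, W x) (u, 0, 0) := by
    intro x u
    have h1 : HasFDerivAt (fun y => H (y, gradient W x, W x))
        ((fderiv ℝ H (x, gradient W x, W x)).comp
          ((ContinuousLinearMap.id ℝ E).prod 0)) x :=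
      (hHd _).hasFDerivAt.comp x (HasFDerivAt.prodMk (hasFDerivAt_id x) (hasFDerivAt_const _ _))
    show ⟪(toDual ℝ E).symm (fderiv ℝ (fun y => H (y, gradient W x, W x)) x), u⟫ = _
    rw [toDual_symm_apply, h1.fderiv]; rfl
  have hg2 : ∀ (x u : E), ⟪gradient (fun p => H (x, p, W x)) (gradient W x), u⟫
      = fderiv ℝ H (x, gradient W x, W x) (0, u, 0) := by
    intro x u
    have h2 : HasFDerivAt (fun p => H (x, p, W x))
        ((fderiv ℝ H (x, gradient W x, W x)).comp
          ((0 : E →L[ℝ] E).prod ((ContinuousLinearMap.id ℝ E).prod 0))) (gradient W x) :=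
      (hHd _).hasFDerivAt.comp _
        (HasFDerivAt.prodMk (hasFDerivAt_const _ _) (HasFDerivAt.prodMk (hasFDerivAt_id _) (hasFDerivAt_const _ _)))
    show ⟪(toDual ℝ E).symm (fderiv ℝ (fun p => H (x, p, W x)) (gradient W x)), u⟫ = _
    rw [toDual_symm_apply, h2.fderiv]; rfl
  have hg3 : ∀ x : E, deriv (fun z => H (x, gradient W x, z)) (W x)
      = fderiv ℝ H (x, gradient W x, W x) (0, 0, 1) := by
    intro x
    have hin : HasDerivAt (fun z : ℝ => ((x, gradient W x, z) : E × E × ℝ))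
        ((0, 0, 1) : E × E × ℝ) (W x) :=
      HasDerivAt.prodMk (hasDerivAt_const _ _) (HasDerivAt.prodMk (hasDerivAt_const _ _) (hasDerivAt_id _))
    exact ((hHd _).hasFDerivAt.comp_hasDerivAt _ hin).deriv
  -- derivative of the full composition
  have hFd : Differentiable ℝ (fun y => H (y, gradient W y, W y)) := by
    intro x
    exact ((hHd _).hasFDerivAt.comp x (HasFDerivAt.prodMk (hasFDerivAt_id x)
      (HasFDerivAt.prodMk ((hGd x).hasFDerivAt) ((hWd x).hasFDerivAt)))).differentiableAt
  have hmain : ∀ (x u : E), fderiv ℝ (fun y => H (y, gradient W y, W y)) x u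
      = ⟪gradient (fun y => H (y, gradient W x, W x)) x
          + fderiv ℝ (gradient W) x (gradient (fun p => H (x, p, W x)) (gradient W x))
          + deriv (fun z => H (x, gradient W x, z)) (W x) • gradient W x, u⟫ := by
    intro x u
    have hF : HasFDerivAt (fun y => H (y, gradient W y, W y))
        ((fderiv ℝ H (x, gradient W x, W x)).comp
          ((ContinuousLinearMap.id ℝ E).prod
            ((fderiv ℝ (gradient W) x).prod (fderiv ℝ W x)))) x :=
      (hHd _).hasFDerivAt.comp x
        (HasFDerivAt.prodMk (hasFDerivAt_id x) (HasFDerivAt.prodMk ((hGd x).hasFDerivAt) ((hWd x).hasFDerivAt)))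
    rw [hF.fderiv]
    have hdecomp : ((u, fderiv ℝ (gradient W) x u, fderiv ℝ W x u) : E × E × ℝ)
        = (u, 0, 0) + (0, fderiv ℝ (gradient W) x u, 0)
          + (fderiv ℝ W x u) • ((0 : E), (0 : E), (1 : ℝ)) := by
      simp [Prod.ext_iff]
    show fderiv ℝ H (x, gradient W x, W x)
        (u, fderiv ℝ (gradient W) x u, fderiv ℝ W x u) = _
    rw [hdecomp, map_add, map_add, map_smul]
    rw [← hg1, ← hg2, hfW]
    rw [inner_add_left, inner_add_left, real_inner_smul_left, hg3]
    have : ⟪gradient (fun p => H (x, p, W x)) (gradient W x),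
        fderiv ℝ (gradient W) x u⟫
        = ⟪fderiv ℝ (gradient W) x
            (gradient (fun p => H (x, p, W x)) (gradient W x)), u⟫ := by
      rw [real_inner_comm]
      exact hsymm x u _
    rw [this]
    rw [smul_eq_mul]
    ring
  constructor
  · intro ha
    have hzero : ∀ x : E, fderiv ℝ (fun y => H (y, gradient W y, W y)) x = 0 := by
      intro x
      ext u
      rw [hmain x u, ha x]
      simp only [ContinuousLinearMap.zero_apply]
      rw [show gradient (fun y => H (y, gradient W x, W x)) x
          + (-gradient (fun y => H (y, gradient W x, W x)) x -
              deriv (fun z => H (x, gradient W x, z)) (W x) • gradient W x)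
          + deriv (fun z => H (x, gradient W x, z)) (W x) • gradient W x = 0 by abel]
      exact inner_zero_left u
    exact ⟨H (0, gradient W 0, W 0), fun x =>
      is_const_of_fderiv_eq_zero hFd hzero x 0⟩
  · rintro ⟨ε, hε⟩ x
    have hconst : (fun y => H (y, gradient W y, W y)) = fun _ => ε := funext hε
    have hzero : fderiv ℝ (fun y => H (y, gradient W y, W y)) x = 0 := by
      rw [hconst]; exact fderiv_const_apply ε
    have hv : gradient (fun y => H (y, gradient W x, W x)) x
        + fderiv ℝ (gradient W) x (gradient (fun p => H (x, p, W x)) (gradient W x))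
        + deriv (fun z => H (x, gradient W x, z)) (W x) • gradient W x = 0 := by
      have h0 : ∀ u : E, ⟪gradient (fun y => H (y, gradient W x, W x)) x
          + fderiv ℝ (gradient W) x (gradient (fun p => H (x, p, W x)) (gradient W x))
          + deriv (fun z => H (x, gradient W x, z)) (W x) • gradient W x, u⟫ = 0 := by
        intro u
        rw [← hmain x u, hzero]
        rfl
      have := h0 (gradient (fun y => H (y, gradient W x, W x)) x
          + fderiv ℝ (gradient W) x (gradient (fun p => H (x, p, W x)) (gradient W x))
          + deriv (fun z => H (x, gradient W x, z)) (W x) • gradient W x)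
      exact inner_self_eq_zero.mp this
    set a := gradient (fun y => H (y, gradient W x, W x)) x with ha
    set b := fderiv ℝ (gradient W) x (gradient (fun p => H (x, p, W x)) (gradient W x)) with hb
    set c := deriv (fun z => H (x, gradient W x, z)) (W x) • gradient W x with hc
    have hb' : b = (a + b + c) - a - c := by abel
    rw [hv] at hb'
    rw [hb']
    abel

/-- evolution Hamilton–Jacobi theorem. For `H : ℝⁿ × ℝⁿ × ℝ` (C¹) and
`W : ℝⁿ → ℝ` (C²), the evolution vector field `ε_H` and the projected vector field
`ε_H^{𝒯*W}` are `𝒯*W`-related iff `x ↦ H(x, ∇W(x), W(x))` is constant. -/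
theorem evolution_hamilton_jacobi
    (n : ℕ)
    (H : EuclideanSpace ℝ (Fin n) × EuclideanSpace ℝ (Fin n) × ℝ → ℝ)
    (W : EuclideanSpace ℝ (Fin n) → ℝ)
    (hH : ContDiff ℝ 1 H) (hW : ContDiff ℝ 2 W) :
    (∀ x : EuclideanSpace ℝ (Fin n),
        fderiv ℝ (gradient W) x
            (gradient (fun p => H (x, p, W x)) (gradient W x)) =
          -gradient (fun y => H (y, gradient W x, W x)) x -
            deriv (fun z => H (x, gradient W x, z)) (W x) • gradient W x) ↔
      (∃ ε : ℝ, ∀ x : EuclideanSpace ℝ (Fin n), H (x, gradient W x, W x) = ε) :=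
  evolution_hj_aux H W hH hW
end
end

section
/- Let Ξ : ℝⁿ × ℝⁿ → ℝ be a continuously differentiable dissipation potential (regarded as a function on ℝⁿ × ℝⁿ × ℝ independent of the last coordinate z) and let S : ℝⁿ → ℝ be twice continuously differentiable. Then the evolution Hamiltonian vector field ε_Ξ on ℝⁿ × ℝⁿ × ℝ and the projected dissipative vector field ε_Ξ^{𝒯*S} are related by T(𝒯*S) ∘ ε_Ξ^{𝒯*S} = ε_Ξ ∘ 𝒯*S, i.e., ∇²S(x)(∂Ξ/∂x*(x, ∇S(x))) = −∂Ξ/∂x(x, ∇S(x)) for all x ∈ ℝⁿ, if and only if the entropy solves the evolution Hamilton–Jacobi equation, i.e., the function x ↦ Ξ(x, ∇S(x)) is constant on ℝⁿ. -/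
open scoped RealInnerProductSpace

noncomputable section

/-- for a z-independent dissipation potential `Ξ` on the extended
cotangent bundle, the evolution Hamiltonian vector field `ε_Ξ` and the projected
dissipative vector field `ε_Ξ^{𝒯*S}` are `𝒯*S`-related iff the entropy solves the
evolution Hamilton–Jacobi equation `Ξ(x, ∇S(x)) = ε`. -/
theorem dissipative_evolution_hamilton_jacobi
    (n : ℕ)
    (Ξ : EuclideanSpace ℝ (Fin n) × EuclideanSpace ℝ (Fin n) → ℝ)
    (S : EuclideanSpace ℝ (Fin n) → ℝ)
    (hΞ : ContDiff ℝ 1 Ξ) (hS : ContDiff ℝ 2 S) :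
    (∀ x : EuclideanSpace ℝ (Fin n),
        fderiv ℝ (gradient S) x
            (gradient (fun p => Ξ (x, p)) (gradient S x)) =
          -gradient (fun y => Ξ (y, gradient S x)) x) ↔
      (∃ ε : ℝ, ∀ x : EuclideanSpace ℝ (Fin n), Ξ (x, gradient S x) = ε) := by
  have hΞd : Differentiable ℝ Ξ := hΞ.differentiable one_ne_zero
  set g : EuclideanSpace ℝ (Fin n) → EuclideanSpace ℝ (Fin n) := gradient S with hg_def
  -- g is C¹
  have hgC : ContDiff ℝ 1 g := by
    have h1 : ContDiff ℝ 1 (fderiv ℝ S) := hS.fderiv_right (le_refl 2)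
    have h2 : g = fun x =>
        (InnerProductSpace.toDual ℝ (EuclideanSpace ℝ (Fin n))).symm (fderiv ℝ S x) := rfl
    rw [h2]
    exact (((InnerProductSpace.toDual ℝ (EuclideanSpace ℝ (Fin n))).symm
      |>.toContinuousLinearEquiv.contDiff)).comp h1
  have hgd : Differentiable ℝ g := hgC.differentiable one_ne_zero
  -- inner-product characterization of gradient
  have key : ∀ (f : EuclideanSpace ℝ (Fin n) → ℝ) (x v : EuclideanSpace ℝ (Fin n)),
      ⟪gradient f x, v⟫ = fderiv ℝ f x v := by
    intro f x v
    simp only [gradient]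
    exact InnerProductSpace.toDual_symm_apply
  -- symmetry of the Hessian
  have hsymm : ∀ x v w : EuclideanSpace ℝ (Fin n),
      ⟪fderiv ℝ g x v, w⟫ = ⟪fderiv ℝ g x w, v⟫ := by
    intro x v w
    have hA : ∀ u : EuclideanSpace ℝ (Fin n), fderiv ℝ g x u =
        (InnerProductSpace.toDual ℝ (EuclideanSpace ℝ (Fin n))).symm
          (fderiv ℝ (fderiv ℝ S) x u) := by
      intro u
      have hgcomp : g = ⇑(InnerProductSpace.toDual ℝ (EuclideanSpace ℝ (Fin n))).symm
          ∘ fderiv ℝ S := rfl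
      rw [hgcomp, LinearIsometryEquiv.comp_fderiv]
      rfl
    have hsnd : IsSymmSndFDerivAt ℝ S x := hS.contDiffAt.isSymmSndFDerivAt (by simp)
    rw [hA v, hA w, InnerProductSpace.toDual_symm_apply, InnerProductSpace.toDual_symm_apply]
    exact hsnd.eq v w
  -- derivative of F x = Ξ (x, g x)
  set F : EuclideanSpace ℝ (Fin n) → ℝ := fun y => Ξ (y, g y) with hF_def
  have hFd : Differentiable ℝ F := hΞd.comp (differentiable_id.prodMk hgd)
  have hF : ∀ x : EuclideanSpace ℝ (Fin n), HasFDerivAt F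
      ((fderiv ℝ Ξ (x, g x)).comp
        ((ContinuousLinearMap.id ℝ (EuclideanSpace ℝ (Fin n))).prod (fderiv ℝ g x))) x := fun x =>
    (hΞd (x, g x)).hasFDerivAt.comp x ((hasFDerivAt_id x).prodMk (hgd x).hasFDerivAt)
  -- partial gradients
  have hGx : ∀ x v : EuclideanSpace ℝ (Fin n), ⟪gradient (fun y => Ξ (y, g x)) x, v⟫ =
      fderiv ℝ Ξ (x, g x) (v, 0) := by
    intro x v
    rw [key]
    have h1 : HasFDerivAt (fun y => Ξ (y, g x))
        ((fderiv ℝ Ξ (x, g x)).comp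
          (ContinuousLinearMap.inl ℝ (EuclideanSpace ℝ (Fin n)) (EuclideanSpace ℝ (Fin n)))) x :=
      (hΞd (x, g x)).hasFDerivAt.comp x (hasFDerivAt_prodMk_left x (g x))
    rw [h1.fderiv]
    rfl
  have hGp : ∀ x v : EuclideanSpace ℝ (Fin n), ⟪gradient (fun p => Ξ (x, p)) (g x), v⟫ =
      fderiv ℝ Ξ (x, g x) (0, v) := by
    intro x v
    rw [key]
    have h1 : HasFDerivAt (fun p => Ξ (x, p))
        ((fderiv ℝ Ξ (x, g x)).comp
          (ContinuousLinearMap.inr ℝ (EuclideanSpace ℝ (Fin n)) (EuclideanSpace ℝ (Fin n))))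
        (g x) :=
      (hΞd (x, g x)).hasFDerivAt.comp (g x) (hasFDerivAt_prodMk_right x (g x))
    rw [h1.fderiv]
    rfl
  -- the main pointwise formula
  have hmain : ∀ x v : EuclideanSpace ℝ (Fin n), fderiv ℝ F x v =
      ⟪gradient (fun y => Ξ (y, g x)) x +
        fderiv ℝ g x (gradient (fun p => Ξ (x, p)) (g x)), v⟫ := by
    intro x v
    rw [(hF x).fderiv]
    have h2 : ((fderiv ℝ Ξ (x, g x)).comp
        ((ContinuousLinearMap.id ℝ (EuclideanSpace ℝ (Fin n))).prod (fderiv ℝ g x))) v =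
        fderiv ℝ Ξ (x, g x) (v, fderiv ℝ g x v) := rfl
    rw [h2]
    have hsplit : (v, fderiv ℝ g x v) =
        ((v, 0) : EuclideanSpace ℝ (Fin n) × EuclideanSpace ℝ (Fin n)) + (0, fderiv ℝ g x v) := by
      simp
    rw [hsplit, map_add, inner_add_left, ← hGx x v, ← hGp x (fderiv ℝ g x v)]
    congr 1
    rw [real_inner_comm, hsymm x v (gradient (fun p => Ξ (x, p)) (g x))]
  constructor
  · intro h
    refine ⟨F 0, fun x => ?_⟩
    have hzero : ∀ y, fderiv ℝ F y = 0 := by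
      intro y
      ext v
      rw [hmain y v, h y]
      simp
    exact is_const_of_fderiv_eq_zero hFd hzero x 0
  · rintro ⟨ε, hε⟩ x
    have hFconst : F = fun _ => ε := funext hε
    have hzero : fderiv ℝ F x = 0 := by rw [hFconst]; exact fderiv_const_apply ε
    have hsum : gradient (fun y => Ξ (y, g x)) x +
        fderiv ℝ g x (gradient (fun p => Ξ (x, p)) (g x)) = 0 := by
      have h0 : ∀ v, ⟪gradient (fun y => Ξ (y, g x)) x +
          fderiv ℝ g x (gradient (fun p => Ξ (x, p)) (g x)), v⟫ = 0 := by
        intro v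
        rw [← hmain x v, hzero]
        rfl
      exact inner_self_eq_zero.mp (h0 _)
    exact eq_neg_of_add_eq_zero_right hsum
end
end

section
/- Let H : ℝⁿ × ℝⁿ × ℝ → ℝ be continuously differentiable, and let c = (x, p, z) : ℝ → ℝⁿ × ℝⁿ × ℝ be a differentiable curve satisfying the evolution Hamilton's equations: x′(t) = H_{x*}(c(t)), p′(t) = −H_x(c(t)) − H_z(c(t)) p(t), z′(t) = ⟨p(t), H_{x*}(c(t))⟩ for all t. Then the function t ↦ H(c(t)) is constant; i.e., the evolution Hamiltonian vector field preserves the Hamiltonian function. -/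
open scoped RealInnerProductSpace

noncomputable section

section Aux

variable {E F : Type*} [NormedAddCommGroup E] [InnerProductSpace ℝ E] [CompleteSpace E]
  [NormedAddCommGroup F] [NormedSpace ℝ F]

lemma inner_gradient_fst (H : E × F → ℝ) {c : E × F} (hH : DifferentiableAt ℝ H c)
    (u : E) : ⟪gradient (fun x' => H (x', c.2)) c.1, u⟫ = fderiv ℝ H c (u, 0) := by
  have h1 : HasFDerivAt (fun x' : E => (x', c.2))
      (ContinuousLinearMap.inl ℝ E F) c.1 := hasFDerivAt_prodMk_left c.1 c.2
  have h2 : HasFDerivAt (fun x' => H (x', c.2))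
      ((fderiv ℝ H c).comp (ContinuousLinearMap.inl ℝ E F)) c.1 :=
    (hH.hasFDerivAt.comp c.1 h1 : _)
  have hg : gradient (fun x' => H (x', c.2)) c.1
      = (InnerProductSpace.toDual ℝ E).symm (fderiv ℝ (fun x' => H (x', c.2)) c.1) := rfl
  rw [hg, h2.fderiv, InnerProductSpace.toDual_symm_apply]
  rfl

lemma deriv_snd_real (H : F × ℝ → ℝ) {c : F × ℝ} (hH : DifferentiableAt ℝ H c)
    (w : ℝ) : deriv (fun z' => H (c.1, z')) c.2 * w = fderiv ℝ H c (0, w) := by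
  have h1 : HasFDerivAt (fun z' : ℝ => (c.1, z'))
      (ContinuousLinearMap.inr ℝ F ℝ) c.2 := hasFDerivAt_prodMk_right c.1 c.2
  have h2 : HasFDerivAt (fun z' => H (c.1, z'))
      ((fderiv ℝ H c).comp (ContinuousLinearMap.inr ℝ F ℝ)) c.2 :=
    (hH.hasFDerivAt.comp c.2 h1 : _)
  rw [h2.hasDerivAt.deriv]
  have hsmul : fderiv ℝ H c (0, w) = w • fderiv ℝ H c (0, 1) := by
    rw [← (fderiv ℝ H c).map_smul]
    norm_num
  rw [hsmul]
  simp [ContinuousLinearMap.comp_apply, mul_comm]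

end Aux

/-- the evolution Hamiltonian vector field preserves the Hamiltonian:
along the evolution Hamilton's equations, `t ↦ H(c(t))` is constant. -/
theorem evolution_hamiltonian_preserved
    (n : ℕ)
    (H : EuclideanSpace ℝ (Fin n) × EuclideanSpace ℝ (Fin n) × ℝ → ℝ)
    (hH : ContDiff ℝ 1 H)
    (x p : ℝ → EuclideanSpace ℝ (Fin n)) (z : ℝ → ℝ)
    (hx : ∀ t : ℝ, HasDerivAt x
      (gradient (fun p' => H (x t, p', z t)) (p t)) t)
    (hp : ∀ t : ℝ, HasDerivAt p
      (-gradient (fun x' => H (x', p t, z t)) (x t) -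
        deriv (fun z' => H (x t, p t, z')) (z t) • p t) t)
    (hz : ∀ t : ℝ, HasDerivAt z
      (⟪p t, gradient (fun p' => H (x t, p', z t)) (p t)⟫) t) :
    ∀ t t' : ℝ, H (x t, p t, z t) = H (x t', p t', z t') := by
  intro t t'
  have key : ∀ s : ℝ, HasDerivAt (fun s => H (x s, p s, z s)) 0 s := by
    intro s
    have hdiff : DifferentiableAt ℝ H (x s, p s, z s) :=
      (hH.differentiable one_ne_zero).differentiableAt
    set Gx := gradient (fun x' => H (x', p s, z s)) (x s) with hGx
    set Gp := gradient (fun p' => H (x s, p', z s)) (p s) with hGp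
    set Hz := deriv (fun z' => H (x s, p s, z')) (z s) with hHz
    have hc : HasDerivAt (fun s => (x s, p s, z s))
        (Gp, -Gx - Hz • p s, ⟪p s, Gp⟫) s :=
      (hx s).prodMk ((hp s).prodMk (hz s))
    have hcomp := hdiff.hasFDerivAt.comp_hasDerivAt s hc
    convert hcomp using 1
    case e'_4 => rfl
    case e'_5 => rfl
    case e'_8 => rfl
    set c : EuclideanSpace ℝ (Fin n) × EuclideanSpace ℝ (Fin n) × ℝ := (x s, p s, z s)
      with hcdef
    -- the partial map in (p, z)
    have h1 : HasFDerivAt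
        (fun q : EuclideanSpace ℝ (Fin n) × ℝ => ((x s, q.1, q.2) :
          EuclideanSpace ℝ (Fin n) × EuclideanSpace ℝ (Fin n) × ℝ))
        (ContinuousLinearMap.inr ℝ (EuclideanSpace ℝ (Fin n))
          (EuclideanSpace ℝ (Fin n) × ℝ)) (p s, z s) :=
      hasFDerivAt_prodMk_right (x s) (p s, z s)
    have hG : HasFDerivAt (fun q : EuclideanSpace ℝ (Fin n) × ℝ => H (x s, q.1, q.2))
        ((fderiv ℝ H c).comp (ContinuousLinearMap.inr ℝ (EuclideanSpace ℝ (Fin n))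
          (EuclideanSpace ℝ (Fin n) × ℝ))) (p s, z s) :=
      (hdiff.hasFDerivAt.comp (p s, z s) h1 : _)
    have hdiff2 : DifferentiableAt ℝ
        (fun q : EuclideanSpace ℝ (Fin n) × ℝ => H (x s, q.1, q.2)) (p s, z s) :=
      hG.differentiableAt
    have hGfderiv : ∀ v : EuclideanSpace ℝ (Fin n) × ℝ,
        fderiv ℝ (fun q : EuclideanSpace ℝ (Fin n) × ℝ => H (x s, q.1, q.2)) (p s, z s) v
          = fderiv ℝ H c (0, v.1, v.2) := by
      intro v
      rw [hG.fderiv]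
      rfl
    have split : (Gp, -Gx - Hz • p s, (⟪p s, Gp⟫ : ℝ))
        = ((Gp, 0, 0) : EuclideanSpace ℝ (Fin n) × EuclideanSpace ℝ (Fin n) × ℝ)
          + (0, -Gx - Hz • p s, 0) + (0, 0, ⟪p s, Gp⟫) := by
      simp [Prod.ext_iff]
    rw [split, map_add, map_add]
    have e1 : fderiv ℝ H c ((Gp, 0, 0) :
        EuclideanSpace ℝ (Fin n) × EuclideanSpace ℝ (Fin n) × ℝ) = ⟪Gx, Gp⟫ := by
      rw [hGx]
      have := inner_gradient_fst H hdiff Gp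
      simpa [hcdef, Prod.mk_zero_zero] using this.symm
    have e2 : fderiv ℝ H c ((0, -Gx - Hz • p s, 0) :
        EuclideanSpace ℝ (Fin n) × EuclideanSpace ℝ (Fin n) × ℝ)
        = ⟪Gp, -Gx - Hz • p s⟫ := by
      have hinner := inner_gradient_fst
        (fun q : EuclideanSpace ℝ (Fin n) × ℝ => H (x s, q.1, q.2)) hdiff2 (-Gx - Hz • p s)
      rw [hGfderiv (-Gx - Hz • p s, 0)] at hinner
      rw [← hinner, hGp]
    have e3 : fderiv ℝ H c ((0, 0, ⟪p s, Gp⟫) :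
        EuclideanSpace ℝ (Fin n) × EuclideanSpace ℝ (Fin n) × ℝ) = Hz * ⟪p s, Gp⟫ := by
      have hderiv := deriv_snd_real
        (fun q : EuclideanSpace ℝ (Fin n) × ℝ => H (x s, q.1, q.2)) hdiff2 ⟪p s, Gp⟫
      rw [hGfderiv (0, ⟪p s, Gp⟫)] at hderiv
      rw [← hderiv, hHz]
    rw [e1, e2, e3]
    simp only [inner_sub_right, inner_neg_right, real_inner_smul_right]
    rw [real_inner_comm Gp Gx, real_inner_comm Gp (p s)]
    ring
  have hdiffH : Differentiable ℝ (fun s => H (x s, p s, z s)) :=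
    fun s => (key s).differentiableAt
  exact is_const_of_deriv_eq_zero hdiffH (fun s => (key s).deriv) t t'
end
end

section
/- Let 𝕃 : ℝⁿ → (n×n real matrices) be continuous with 𝕃(x) skew-symmetric for every x, let Φ : ℝⁿ → ℝ be continuously differentiable, let e* ≠ 0 be real, and let Ξ : ℝⁿ × ℝⁿ → ℝ be such that for every x the function x* ↦ Ξ(x, x*) is convex, differentiable, and attains its minimum at x* = 0 with Ξ(x, 0) = 0. If x : ℝ → ℝⁿ is a differentiable solution of the GENERIC equation x′(t) = (1/e*) 𝕃(x(t)) ∇Φ(x(t)) − ∂Ξ/∂x*(x(t), ∇Φ(x(t))), then for all t, d/dt [Φ(x(t))] = −⟨∇Φ(x(t)), ∂Ξ/∂x*(x(t), ∇Φ(x(t)))⟩ ≤ 0; in particular the thermodynamic potential Φ is nonincreasing along solutions (the second law of thermodynamics). -/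
open scoped RealInnerProductSpace

noncomputable section

/-- For a convex differentiable function `f` minimized at `0`, `⟪∇f p, p⟫ ≥ 0`. -/
lemma aux_inner_grad_nonneg {n : ℕ}
    (f : EuclideanSpace ℝ (Fin n) → ℝ)
    (hconv : ConvexOn ℝ Set.univ f)
    (hdiff : Differentiable ℝ f)
    (hmin : ∀ p, f 0 ≤ f p)
    (p : EuclideanSpace ℝ (Fin n)) :
    0 ≤ ⟪gradient f p, p⟫ := by
  set g := gradient f p
  -- φ(s) = f(s • p)
  set φ : ℝ → ℝ := fun s => f (s • p) with hφ
  have hφconv : ConvexOn ℝ Set.univ φ := by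
    refine ⟨convex_univ, ?_⟩
    intro a _ b _ μ ν hμ hν hμν
    have := hconv.2 (Set.mem_univ (a • p)) (Set.mem_univ (b • p)) hμ hν hμν
    simpa [φ, smul_smul, add_smul] using this
  have hderiv : HasDerivAt φ ⟪g, p⟫ 1 := by
    have h1 : HasDerivAt (fun s : ℝ => s • p) p 1 := by
      simpa using (hasDerivAt_id (1 : ℝ)).smul_const p
    have h2 : HasGradientAt f g p := (hdiff p).hasGradientAt
    have h2' : HasFDerivAt f
        (InnerProductSpace.toDual ℝ (EuclideanSpace ℝ (Fin n)) g) ((1:ℝ) • p) := by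
      rw [one_smul]; exact h2.hasFDerivAt
    have h3 := h2'.comp_hasDerivAt 1 h1
    simp only [InnerProductSpace.toDual_apply_apply] at h3
    exact h3
  have hslope := hφconv.slope_le_of_hasDerivAt (Set.mem_univ (0 : ℝ))
    (Set.mem_univ (1 : ℝ)) one_pos hderiv
  have : φ 1 - φ 0 ≤ ⟪g, p⟫ := by
    simpa [slope_def_field] using hslope
  have h0 : φ 0 ≤ φ 1 := by simpa [φ] using hmin p
  linarith

/-- along solutions of the GENERIC equation
`x' = (1/e*) 𝕃(x) ∇Φ(x) − ∂Ξ/∂x*(x, ∇Φ(x))` with skew-symmetric `𝕃` and a convex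
dissipation potential minimized at `0`, the thermodynamic potential `Φ` satisfies
`d/dt Φ(x(t)) = −⟨∇Φ, ∂Ξ/∂x*(x, ∇Φ)⟩ ≤ 0` (the second law of thermodynamics). -/
theorem generic_second_law
    (n : ℕ)
    (L : EuclideanSpace ℝ (Fin n) →
      (EuclideanSpace ℝ (Fin n) →L[ℝ] EuclideanSpace ℝ (Fin n)))
    (hL : Continuous L)
    (hskew : ∀ (x v w : EuclideanSpace ℝ (Fin n)), ⟪L x v, w⟫ = -⟪v, L x w⟫)
    (Φ : EuclideanSpace ℝ (Fin n) → ℝ) (hΦ : ContDiff ℝ 1 Φ)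
    (estar : ℝ) (he : estar ≠ 0)
    (Ξ : EuclideanSpace ℝ (Fin n) × EuclideanSpace ℝ (Fin n) → ℝ)
    (hconv : ∀ x : EuclideanSpace ℝ (Fin n),
      ConvexOn ℝ Set.univ (fun p => Ξ (x, p)))
    (hdiff : ∀ x : EuclideanSpace ℝ (Fin n),
      Differentiable ℝ (fun p => Ξ (x, p)))
    (hmin : ∀ (x : EuclideanSpace ℝ (Fin n)) (p : EuclideanSpace ℝ (Fin n)),
      Ξ (x, 0) ≤ Ξ (x, p))
    (hzero : ∀ x : EuclideanSpace ℝ (Fin n), Ξ (x, 0) = 0)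
    (x : ℝ → EuclideanSpace ℝ (Fin n))
    (hx : ∀ t : ℝ, HasDerivAt x
      ((1 / estar) • L (x t) (gradient Φ (x t)) -
        gradient (fun p => Ξ (x t, p)) (gradient Φ (x t))) t) :
    ∀ t : ℝ,
      HasDerivAt (fun s => Φ (x s))
        (-⟪gradient Φ (x t),
            gradient (fun p => Ξ (x t, p)) (gradient Φ (x t))⟫) t ∧
      -⟪gradient Φ (x t),
          gradient (fun p => Ξ (x t, p)) (gradient Φ (x t))⟫ ≤ 0 := by
  intro t
  set g := gradient Φ (x t) with hg
  set gΞ := gradient (fun p => Ξ (x t, p)) g with hgΞ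
  have hΦd : Differentiable ℝ Φ := hΦ.differentiable one_ne_zero
  constructor
  · have hgrad : HasGradientAt Φ g (x t) := (hΦd (x t)).hasGradientAt
    have hchain := hgrad.hasFDerivAt.comp_hasDerivAt t (hx t)
    have hLg : ⟪g, L (x t) g⟫ = 0 := by
      have h1 := hskew (x t) g g
      have h2 : ⟪L (x t) g, g⟫ = ⟪g, L (x t) g⟫ := real_inner_comm _ _
      linarith
    have hval : ⟪g, (1 / estar) • L (x t) g - gΞ⟫ = -⟪g, gΞ⟫ := by
      rw [inner_sub_right, inner_smul_right, hLg]
      ring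
    have : (InnerProductSpace.toDual ℝ (EuclideanSpace ℝ (Fin n)) g)
        ((1 / estar) • L (x t) g - gΞ) = -⟪g, gΞ⟫ := by
      simpa [InnerProductSpace.toDual_apply_apply] using hval
    rw [← this]
    exact hchain
  · have := aux_inner_grad_nonneg (fun p => Ξ (x t, p)) (hconv (x t))
      (hdiff (x t)) (fun p => hmin (x t) p) g
    have hsym : ⟪gΞ, g⟫ = ⟪g, gΞ⟫ := real_inner_comm _ _
    linarith
end
end

section
/- For all positive reals x and y, √(x·y)·sinh((ln y − ln x)/2) = (y − x)/2. Consequently, for the chemical-kinetics dissipation potential Ξ(x, y, x*, y*) = k √(x y) cosh((y* − x*)/2) and the entropy S(x, y) = x(ln x − 1) + y(ln y − 1), the projected gradient vector field satisfies ∂Ξ/∂x*(x, y, ln x, ln y) = k(x − y)/4 and ∂Ξ/∂y*(x, y, ln x, ln y) = k(y − x)/4, so the projection of the chemical-kinetics Hamiltonian dynamics onto the base manifold is the linear mass-action dynamics in which dx/dt and dy/dt are proportional to x − y and y − x respectively and the total mass x + y is conserved. -/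
noncomputable section

lemma sqrt_sinh_key (x y : ℝ) (hx : 0 < x) (hy : 0 < y) :
    Real.sqrt (x * y) * Real.sinh ((Real.log y - Real.log x) / 2) = (y - x) / 2 := by
  have hsx : (0:ℝ) < Real.sqrt x := Real.sqrt_pos.mpr hx
  have hsy : (0:ℝ) < Real.sqrt y := Real.sqrt_pos.mpr hy
  have hex : Real.exp (Real.log x / 2) = Real.sqrt x := by
    have h : Real.exp (Real.log x / 2) ^ 2 = x := by
      rw [sq, ← Real.exp_add]; ring_nf; exact Real.exp_log hx
    conv_rhs => rw [← h]
    rw [Real.sqrt_sq (Real.exp_pos _).le]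
  have hey : Real.exp (Real.log y / 2) = Real.sqrt y := by
    have h : Real.exp (Real.log y / 2) ^ 2 = y := by
      rw [sq, ← Real.exp_add]; ring_nf; exact Real.exp_log hy
    conv_rhs => rw [← h]
    rw [Real.sqrt_sq (Real.exp_pos _).le]
  rw [Real.sinh_eq, Real.sqrt_mul hx.le]
  have h1 : Real.exp ((Real.log y - Real.log x) / 2)
      = Real.sqrt y / Real.sqrt x := by
    rw [← hex, ← hey, ← Real.exp_sub]; ring_nf
  have h2 : Real.exp (-((Real.log y - Real.log x) / 2))
      = Real.sqrt x / Real.sqrt y := by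
    rw [← hex, ← hey, ← Real.exp_sub]; ring_nf
  rw [h1, h2]
  field_simp
  nlinarith [Real.sq_sqrt hy.le, Real.sq_sqrt hx.le]

/-- `√(xy) sinh((ln y − ln x)/2) = (y − x)/2` for `x, y > 0`; consequently,
for the chemical-kinetics dissipation potential `Ξ(x,y,x*,y*) = k√(xy) cosh((y*−x*)/2)`
evaluated at `(x*, y*) = (ln x, ln y)` (the gradient of the ideal-mixture entropy), the
projected gradient vector field is the linear mass-action dynamics:
`∂Ξ/∂x* = k(x−y)/4`, `∂Ξ/∂y* = k(y−x)/4`, and the total mass `x + y` is conserved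
(the two rates sum to zero). -/
theorem chemical_kinetics_mass_action
    (k x y : ℝ) (hx : 0 < x) (hy : 0 < y)
    (Ξ : ℝ → ℝ → ℝ → ℝ → ℝ)
    (hΞ : ∀ a b xs ys : ℝ,
      Ξ a b xs ys = k * Real.sqrt (a * b) * Real.cosh ((ys - xs) / 2)) :
    Real.sqrt (x * y) * Real.sinh ((Real.log y - Real.log x) / 2) = (y - x) / 2 ∧
    deriv (fun xs => Ξ x y xs (Real.log y)) (Real.log x) = k * (x - y) / 4 ∧
    deriv (fun ys => Ξ x y (Real.log x) ys) (Real.log y) = k * (y - x) / 4 ∧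
    k * (x - y) / 4 + k * (y - x) / 4 = 0 := by
  have key := sqrt_sinh_key x y hx hy
  refine ⟨key, ?_, ?_, by ring⟩
  · have h1 : HasDerivAt (fun xs : ℝ => (Real.log y - xs) / 2) (-1/2) (Real.log x) := by
      simpa using ((hasDerivAt_const (Real.log x) (Real.log y)).sub
        (hasDerivAt_id (Real.log x))).div_const 2
    have h2 := ((h1.cosh).const_mul (k * Real.sqrt (x * y)))
    have heq : (fun xs => Ξ x y xs (Real.log y))
        = fun xs => k * Real.sqrt (x * y) * Real.cosh ((Real.log y - xs) / 2) := by
      funext xs; exact hΞ x y xs (Real.log y)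
    rw [heq, h2.deriv]
    have : k * Real.sqrt (x * y) *
        (Real.sinh ((Real.log y - Real.log x) / 2) * (-1 / 2))
        = k * (Real.sqrt (x * y) * Real.sinh ((Real.log y - Real.log x) / 2)) * (-1/2) := by
      ring
    rw [this, key]; ring
  · have h1 : HasDerivAt (fun ys : ℝ => (ys - Real.log x) / 2) (1/2) (Real.log y) := by
      simpa using ((hasDerivAt_id (Real.log y)).sub
        (hasDerivAt_const (Real.log y) (Real.log x))).div_const 2
    have h2 := ((h1.cosh).const_mul (k * Real.sqrt (x * y)))
    have heq : (fun ys => Ξ x y (Real.log x) ys)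
        = fun ys => k * Real.sqrt (x * y) * Real.cosh ((ys - Real.log x) / 2) := by
      funext ys; exact hΞ x y (Real.log x) ys
    rw [heq, h2.deriv]
    have : k * Real.sqrt (x * y) *
        (Real.sinh ((Real.log y - Real.log x) / 2) * (1 / 2))
        = k * (Real.sqrt (x * y) * Real.sinh ((Real.log y - Real.log x) / 2)) * (1/2) := by
      ring
    rw [this, key]; ring
end
end
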